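/- Under the setting of the previous statement, if additionally F(x) − min_{u∈X} F(u) ≤ ε, then ‖x⁺ − x‖²/γ² ≤ 2H_F(1 + H_F)·ε^{2ν/(1+ν)}. -/

import Mathlib

/-!
The Hölder condition gives the descent inequality
`F x⁺ ≤ F x + ⟪∇F x, x⁺ - x⟫ + H/(1+ν) ‖x⁺ - x‖^(1+ν)`, and first-order optimality of `x⁺` for
the quadratic model gives `⟪∇F x, x⁺ - x⟫ ≤ -‖x⁺ - x‖²/γ`. Young's inequality with weights
`(1+ν)/2` and `(1-ν)/2` splits `H/(1+ν) ‖x⁺ - x‖^(1+ν)` into `‖x⁺ - x‖²/(2γ) + Hε/2`; this is where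
the choice of `γ` enters. Hence `‖x⁺ - x‖²/(2γ) ≤ F x - F x⁺ + Hε/2 ≤ (1 + H/2) ε`, and
multiplying by `2/γ = 2H ε^(-(1-ν)/(1+ν))` gives the bound.
-/

open Set
open scoped RealInnerProductSpace

theorem rpow_one_add_le_young {r ε ν : ℝ} (hr : 0 ≤ r) (hε : 0 < ε) (hν₀ : 0 < 1 + ν)
    (hν₁ : ν ≤ 1) :
    r ^ (1 + ν) ≤ (1 + ν) / 2 * (ε ^ (-((1 - ν) / (1 + ν))) * r ^ 2) + (1 - ν) / 2 * ε := by
  have h := Real.geom_mean_le_arith_mean2_weighted (w₁ := (1 + ν) / 2) (w₂ := (1 - ν) / 2)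
    (by positivity) (by linarith) (by positivity : 0 ≤ ε ^ (-((1 - ν) / (1 + ν))) * r ^ 2) hε.le
    (by ring)
  convert h using 1
  rw [Real.mul_rpow (by positivity) (by positivity), ← Real.rpow_mul hε.le,
    ← Real.rpow_natCast_mul hr, mul_right_comm, ← Real.rpow_add hε]
  have hexp : -((1 - ν) / (1 + ν)) * ((1 + ν) / 2) + (1 - ν) / 2 = 0 := by
    field_simp
    ring
  rw [hexp, Real.rpow_zero, one_mul]
  congr 1
  push_cast
  ring

theorem one_div_one_div_mul_rpow {H ε a : ℝ} (hε : 0 ≤ ε) :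
    1 / (1 / H * ε ^ a) = H * ε ^ (-a) := by
  rw [Real.rpow_neg hε, one_div, mul_inv, one_div, inv_inv]

section

variable {E : Type*} [NormedAddCommGroup E] [InnerProductSpace ℝ E]

theorem inner_sub_le_mul_rpow_of_holder {g : E → E} {x d : E} {H ν t : ℝ} (hν : 1 + ν ≠ 0)
    (ht : 0 ≤ t)
    (hhold : ‖g (x + t • d) - g x‖ ≤ H * ‖x + t • d - x‖ ^ ν) :
    ⟪g (x + t • d) - g x, d⟫ ≤ H * ‖d‖ ^ (1 + ν) * t ^ ν := calc
  _ ≤ ‖g (x + t • d) - g x‖ * ‖d‖ := real_inner_le_norm _ _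
  _ ≤ H * ‖x + t • d - x‖ ^ ν * ‖d‖ := by gcongr
  _ = H * ‖d‖ ^ (1 + ν) * t ^ ν := by
    rw [add_sub_cancel_left, norm_smul, Real.norm_of_nonneg ht,
      Real.mul_rpow ht (norm_nonneg d), Real.rpow_one_add' (norm_nonneg d) hν]
    ring

theorem Convex.inner_add_two_mul_sq_norm_nonpos_of_isMinOn {X : Set E} (hX : Convex ℝ X)
    {v x xp : E} {c : ℝ} (hx : x ∈ X) (hxp : xp ∈ X)
    (hmin : ∀ u ∈ X, ⟪v, xp - x⟫ + c * ‖xp - x‖ ^ 2 ≤ ⟪v, u - x⟫ + c * ‖u - x‖ ^ 2) :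
    ⟪v, xp - x⟫ + 2 * c * ‖xp - x‖ ^ 2 ≤ 0 := by
  have hloc : IsLocalMinOn (fun u => ⟪v, u - x⟫ + c * ‖u - x‖ ^ 2) X xp :=
    IsMinOn.localize fun u hu => hmin u hu
  have hdiff := (hasFDerivAt_id (𝕜 := ℝ) xp).sub_const x
  have key : 0 ≤ ⟪v, x - xp⟫ + c * (2 * ⟪xp - x, x - xp⟫) := by
    convert hloc.hasFDerivWithinAt_nonneg
      (((hasFDerivAt_const v xp).inner ℝ hdiff).add (hdiff.norm_sq.const_mul c)).hasFDerivWithinAt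
      (sub_mem_posTangentConeAt_of_segment_subset (hX.segment_subset hxp hx)) using 1
    simp [inner_sub_left]
  rw [← neg_sub xp x, inner_neg_right, inner_neg_right, real_inner_self_eq_norm_sq] at key
  linarith

variable [CompleteSpace E]

theorem HasGradientAt.hasDerivAt_comp_add_smul {F : E → ℝ} {g x d : E} {t : ℝ}
    (h : HasGradientAt F g (x + t • d)) : HasDerivAt (fun s : ℝ => F (x + s • d)) ⟪g, d⟫ t := by
  have hline : HasDerivAt (fun s : ℝ => x + s • d) d t := by
    simpa using ((hasDerivAt_id t).smul_const d).const_add x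
  have := h.hasFDerivAt.comp_hasDerivAt t hline
  rwa [InnerProductSpace.toDual_apply_apply] at this

theorem Convex.le_add_inner_add_rpow_of_holder {X : Set E} (hX : Convex ℝ X) {F : E → ℝ}
    {g : E → E} {H ν : ℝ} (hν : 0 < 1 + ν) {x y : E} (hx : x ∈ X) (hy : y ∈ X)
    (hgrad : ∀ z ∈ X, HasGradientAt F (g z) z)
    (hhold : ∀ z ∈ X, ‖g z - g x‖ ≤ H * ‖z - x‖ ^ ν) :
    F y ≤ F x + ⟪g x, y - x⟫ + H / (1 + ν) * ‖y - x‖ ^ (1 + ν) := by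
  set d := y - x
  have hseg : ∀ t ∈ Icc (0 : ℝ) 1, x + t • d ∈ X := fun t ht => by
    simpa [d, AffineMap.lineMap_apply_module', add_comm] using
      hX.lineMap_mem hx hy ⟨ht.1, ht.2⟩
  set ψ : ℝ → ℝ := fun t =>
    H / (1 + ν) * ‖d‖ ^ (1 + ν) * t ^ (1 + ν) - F (x + t • d) + t * ⟪g x, d⟫
  have hFline : ∀ t ∈ Icc (0 : ℝ) 1,
      HasDerivAt (fun s : ℝ => F (x + s • d)) ⟪g (x + t • d), d⟫ t :=
    fun t ht => (hgrad _ (hseg t ht)).hasDerivAt_comp_add_smul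
  have hψcont : ContinuousOn ψ (Icc 0 1) := fun t ht =>
    ((((continuous_id.rpow_const fun _ => Or.inr hν.le).continuousAt.const_mul _).sub
      (hFline t ht).continuousAt).add (continuousAt_id.mul continuousAt_const)).continuousWithinAt
  have hψmono : MonotoneOn ψ (Icc 0 1) := by
    refine monotoneOn_of_hasDerivWithinAt_nonneg (convex_Icc 0 1) hψcont
      (f' := fun t => H * ‖d‖ ^ (1 + ν) * t ^ ν - ⟪g (x + t • d) - g x, d⟫) (fun t ht => ?_) ?_
    · rw [interior_Icc] at ht
      have h := (((Real.hasDerivAt_rpow_const (p := 1 + ν) (Or.inl ht.1.ne')).const_mul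
        (H / (1 + ν) * ‖d‖ ^ (1 + ν))).sub
        (hFline t (Ioo_subset_Icc_self ht))).add ((hasDerivAt_id t).mul_const ⟪g x, d⟫)
      refine (h.congr_deriv ?_).hasDerivWithinAt
      rw [inner_sub_left, add_sub_cancel_left]
      field_simp
      ring
    · intro t ht
      rw [interior_Icc] at ht
      exact sub_nonneg.2 (inner_sub_le_mul_rpow_of_holder hν.ne' ht.1.le
        (hhold _ (hseg t (Ioo_subset_Icc_self ht))))
  have h01 := hψmono (left_mem_Icc.2 zero_le_one) (right_mem_Icc.2 zero_le_one) zero_le_one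
  simp only [ψ, Real.zero_rpow hν.ne', mul_zero, zero_smul, add_zero, zero_sub, zero_mul,
    Real.one_rpow, mul_one, one_smul, one_mul, d, add_sub_cancel] at h01
  linarith

theorem Convex.one_div_two_mul_mul_sq_norm_le_of_proxStep {X : Set E} (hX : Convex ℝ X)
    {F : E → ℝ} {g : E → E} {H ν ε γ : ℝ} (hH : 0 ≤ H) (hν : ν ∈ Icc (0 : ℝ) 1) (hε : 0 < ε)
    (hγ : γ = (1 / H) * ε ^ ((1 - ν) / (1 + ν))) {x xp : E} (hx : x ∈ X) (hxp : xp ∈ X)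
    (hgrad : ∀ z ∈ X, HasGradientAt F (g z) z)
    (hhold : ∀ z ∈ X, ‖g z - g x‖ ≤ H * ‖z - x‖ ^ ν)
    (hmin : ∀ u ∈ X,
      ⟪g x, xp - x⟫ + (1 / (2 * γ)) * ‖xp - x‖ ^ 2 ≤
        ⟪g x, u - x⟫ + (1 / (2 * γ)) * ‖u - x‖ ^ 2) :
    1 / (2 * γ) * ‖xp - x‖ ^ 2 ≤ F x - F xp + H / 2 * ε := by
  obtain ⟨hν₀, hν₁⟩ := hν
  have hhalf : 1 / (2 * γ) = H / 2 * ε ^ (-((1 - ν) / (1 + ν))) := by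
    rw [← one_div_mul_one_div, hγ, one_div_one_div_mul_rpow hε.le]
    ring
  have hdesc := hX.le_add_inner_add_rpow_of_holder (by linarith) hx hxp hgrad hhold
  have hopt := hX.inner_add_two_mul_sq_norm_nonpos_of_isMinOn hx hxp hmin
  have hyoung := rpow_one_add_le_young (norm_nonneg (xp - x)) hε (by linarith) hν₁
  have hratio : (1 - ν) / (1 + ν) ≤ 1 := (div_le_one (by linarith)).2 (by linarith)
  have hremainder : H / (1 + ν) * ‖xp - x‖ ^ (1 + ν) ≤
      1 / (2 * γ) * ‖xp - x‖ ^ 2 + H / 2 * ε := calc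
    _ ≤ H / (1 + ν) * ((1 + ν) / 2 * (ε ^ (-((1 - ν) / (1 + ν))) * ‖xp - x‖ ^ 2) +
        (1 - ν) / 2 * ε) := by gcongr
    _ = 1 / (2 * γ) * ‖xp - x‖ ^ 2 + H / 2 * ((1 - ν) / (1 + ν)) * ε := by
      rw [hhalf]
      field_simp
    _ ≤ 1 / (2 * γ) * ‖xp - x‖ ^ 2 + H / 2 * ε := by
      gcongr
      exact mul_le_of_le_one_right (by positivity) hratio
  linarith

end

theorem stmt_13_general (n : ℕ) (X : Set (EuclideanSpace ℝ (Fin n)))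
    (hXc : Convex ℝ X)
    (F : EuclideanSpace ℝ (Fin n) → ℝ) (g : EuclideanSpace ℝ (Fin n) → EuclideanSpace ℝ (Fin n))
    (HF ν ε : ℝ) (hHF : 0 < HF) (hν : ν ∈ Set.Ioc (0 : ℝ) 1) (hε : 0 < ε)
    (hgrad : ∀ x ∈ X, HasGradientAt F (g x) x)
    (hhold : ∀ x ∈ X, ∀ x' ∈ X, ‖g x' - g x‖ ≤ HF * ‖x' - x‖ ^ ν)
    (γ : ℝ) (hγ : γ = (1 / HF) * ε ^ ((1 - ν) / (1 + ν)))
    (x xp : EuclideanSpace ℝ (Fin n)) (hx : x ∈ X) (hxp : xp ∈ X)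
    (hmin : ∀ u ∈ X,
      ⟪g x, xp - x⟫ + (1 / (2 * γ)) * ‖xp - x‖ ^ 2 ≤
        ⟪g x, u - x⟫ + (1 / (2 * γ)) * ‖u - x‖ ^ 2)
    (hsub : ∀ u ∈ X, F x - F u ≤ ε) :
    ‖xp - x‖ ^ 2 / γ ^ 2 ≤ 2 * HF * (1 + HF) * ε ^ (2 * ν / (1 + ν)) := by
  obtain ⟨hν₀, hν₁⟩ := hν
  have hstep := hXc.one_div_two_mul_mul_sq_norm_le_of_proxStep hHF.le ⟨hν₀.le, hν₁⟩ hε hγ hx hxp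
    hgrad (hhold x hx) hmin
  have hgap := hsub xp hxp
  have hinv : 1 / γ = HF * ε ^ (-((1 - ν) / (1 + ν))) := hγ ▸ one_div_one_div_mul_rpow hε.le
  have hexp : -((1 - ν) / (1 + ν)) + 1 = 2 * ν / (1 + ν) := by
    field_simp
    ring
  calc ‖xp - x‖ ^ 2 / γ ^ 2 = 1 / γ * (2 * (1 / (2 * γ) * ‖xp - x‖ ^ 2)) := by ring
    _ ≤ 1 / γ * (2 * (ε + HF / 2 * ε)) := by
      gcongr
      · rw [hinv]; positivity
      · linarith
    _ = HF * (2 + HF) * ε ^ (2 * ν / (1 + ν)) := by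
      rw [hinv, ← hexp, Real.rpow_add_one hε.ne']
      ring
    _ ≤ 2 * HF * (1 + HF) * ε ^ (2 * ν / (1 + ν)) :=
      mul_le_mul_of_nonneg_right (by nlinarith) (by positivity)

/-- Under the setting of the projected-gradient step with `(H_F, ν)`-Hölder smooth `F`,
if additionally `F(x) - min_{u ∈ X} F(u) ≤ ε`, then
`‖x⁺ - x‖²/γ² ≤ 2 H_F (1 + H_F) ε^{2ν/(1+ν)}`. -/
theorem stmt_13 (n : ℕ) (X : Set (EuclideanSpace ℝ (Fin n)))
    (hXc : Convex ℝ X) (hXcl : IsClosed X)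
    (F : EuclideanSpace ℝ (Fin n) → ℝ) (g : EuclideanSpace ℝ (Fin n) → EuclideanSpace ℝ (Fin n))
    (HF ν ε : ℝ) (hHF : 0 < HF) (hν : ν ∈ Set.Ioc (0 : ℝ) 1) (hε : 0 < ε)
    (hgrad : ∀ x ∈ X, HasGradientAt F (g x) x)
    (hhold : ∀ x ∈ X, ∀ x' ∈ X, ‖g x' - g x‖ ≤ HF * ‖x' - x‖ ^ ν)
    (γ : ℝ) (hγ : γ = (1 / HF) * ε ^ ((1 - ν) / (1 + ν)))
    (x xp : EuclideanSpace ℝ (Fin n)) (hx : x ∈ X) (hxp : xp ∈ X)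
    (hmin : ∀ u ∈ X,
      ⟪g x, xp - x⟫ + (1 / (2 * γ)) * ‖xp - x‖ ^ 2 ≤
        ⟪g x, u - x⟫ + (1 / (2 * γ)) * ‖u - x‖ ^ 2)
    (hsub : ∀ u ∈ X, F x - F u ≤ ε) :
    ‖xp - x‖ ^ 2 / γ ^ 2 ≤ 2 * HF * (1 + HF) * ε ^ (2 * ν / (1 + ν)) :=
  stmt_13_general n X hXc F g HF ν ε hHF hν hε hgrad hhold γ hγ x xp hx hxp hmin hsub
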